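/- Let A, B be 2×2 complex matrices satisfying condition (*) (rank of the 2×4 concatenation (A B) is 2 and A J A* = B J B*), and assume in addition rank(A) = 1. Then for all vectors ξ, η ∈ ℂ², the equality A ξ = B η forces A ξ = 0 (and hence B η = 0); consequently A J A* = 0 and B J B* = 0. -/

import Mathlib

/-! The identity `det (M J Mᴴ) = |det M|²` transfers `det A = 0` to `det B = 0`, so both `A` and `B`
have rank at most one. A nonzero vector `A ξ = B η` would lie in both column spaces, and then the
column space of `(A B)` would be a line, contradicting rank two. Hence the column spaces of `A` and
`B` meet only in `0`, and each column `A (J Aᴴ eⱼ) = B (J Bᴴ eⱼ)` of `A J Aᴴ = B J Bᴴ` vanishes. -/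

open Matrix Module

def Jmat : Matrix (Fin 2) (Fin 2) ℂ := !![0, -1; 1, 0]

namespace Matrix

variable {K R m n n' : Type*} [Fintype n] [Fintype n']

theorem range_mulVecLin_fromCols [CommSemiring R] (A : Matrix m n R) (B : Matrix m n' R) :
    LinearMap.range (fromCols A B).mulVecLin =
      LinearMap.range A.mulVecLin ⊔ LinearMap.range B.mulVecLin := by
  have hcol : (fromCols A B).col = Sum.elim A.col B.col := by
    ext (j | j) i <;> rfl
  rw [range_mulVecLin, range_mulVecLin, range_mulVecLin, hcol, Set.Sum.elim_range,
    Submodule.span_union]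

theorem rank_fromCols_lt_add_of_mulVec_eq [Field K] [Finite m] {A : Matrix m n K}
    {B : Matrix m n' K} {ξ : n → K} {η : n' → K} (h : A *ᵥ ξ = B *ᵥ η) (h0 : A *ᵥ ξ ≠ 0) :
    (fromCols A B).rank < A.rank + B.rank := by
  have hmem : A *ᵥ ξ ∈ LinearMap.range A.mulVecLin ⊓ LinearMap.range B.mulVecLin :=
    ⟨⟨ξ, rfl⟩, ⟨η, h.symm⟩⟩
  have hinf : 0 < finrank K ↥(LinearMap.range A.mulVecLin ⊓ LinearMap.range B.mulVecLin) :=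
    finrank_pos_iff_exists_ne_zero.2 ⟨⟨_, hmem⟩, by simpa using h0⟩
  have := Submodule.finrank_sup_add_finrank_inf_eq (LinearMap.range A.mulVecLin)
    (LinearMap.range B.mulVecLin)
  unfold rank
  rw [range_mulVecLin_fromCols]
  omega

theorem rank_lt_card_iff_det_eq_zero [Field K] [DecidableEq n] (M : Matrix n n K) :
    M.rank < Fintype.card n ↔ M.det = 0 := by
  refine ⟨fun h => by_contra fun hdet => h.ne (M.rank_of_isUnit ?_), fun hdet => ?_⟩
  · exact (isUnit_iff_isUnit_det M).2 (Ne.isUnit hdet)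
  refine M.rank_le_card_width.lt_of_ne fun hcard => ?_
  have htop : LinearMap.range M.mulVecLin = ⊤ :=
    Submodule.eq_top_of_finrank_eq (hcard.trans (finrank_fintype_fun_eq_card K).symm)
  have hunit : IsUnit M := mulVec_surjective_iff_isUnit.1 fun v => LinearMap.range_eq_top.1 htop v
  exact ((isUnit_iff_isUnit_det M).1 hunit).ne_zero hdet

theorem mul_eq_zero_of_mul_eq [CommSemiring R] [DecidableEq n] {A : Matrix m n R}
    {B : Matrix m n' R} (hAB : ∀ ξ η, A *ᵥ ξ = B *ᵥ η → A *ᵥ ξ = 0) {X : Matrix n n R} {Y : Matrix n' n R}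
    (h : A * X = B * Y) : A * X = 0 := by
  refine ext_of_mulVec_single fun j => ?_
  rw [zero_mulVec, ← mulVec_mulVec]
  exact hAB _ (Y *ᵥ Pi.single j 1) (by rw [mulVec_mulVec, mulVec_mulVec, h])

end Matrix

/-- Claim (A.18): under condition (*) with `rank A = 1`, `A ξ = B η` forces
`A ξ = 0 = B η`, and consequently `A J Aᴴ = 0` and `B J Bᴴ = 0`. -/
theorem rankOne_AeqB_forces_zero (A B : Matrix (Fin 2) (Fin 2) ℂ)
    (hrank : (Matrix.fromCols A B).rank = 2)
    (hsym : A * Jmat * Aᴴ = B * Jmat * Bᴴ)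
    (hA : A.rank = 1) :
    (∀ ξ η : Fin 2 → ℂ, A.mulVec ξ = B.mulVec η →
      A.mulVec ξ = 0 ∧ B.mulVec η = 0) ∧
    A * Jmat * Aᴴ = 0 ∧ B * Jmat * Bᴴ = 0 := by
  have hdetA : A.det = 0 := (rank_lt_card_iff_det_eq_zero A).1 (by simp [hA])
  have hdetB : B.det = 0 := by
    simpa [det_mul, hdetA, Jmat] using congrArg det hsym
  have hB : B.rank < 2 := by simpa using (rank_lt_card_iff_det_eq_zero B).2 hdetB
  have hAB : ∀ ξ η, A *ᵥ ξ = B *ᵥ η → A *ᵥ ξ = 0 := fun ξ η h => by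
    by_contra h0
    have := rank_fromCols_lt_add_of_mulVec_eq h h0
    omega
  have hS : A * Jmat * Aᴴ = 0 := by
    simpa only [mul_assoc] using mul_eq_zero_of_mul_eq hAB (by simpa only [mul_assoc] using hsym)
  exact ⟨fun ξ η h => ⟨hAB ξ η h, h ▸ hAB ξ η h⟩, hS, hsym ▸ hS⟩
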